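/- In the bivariate torus graph phase difference model with density proportional to exp(α cos(x₁-x₂) + β sin(x₁-x₂) + Σ_j κ_j cos(x_j-μ_j)) on [0,2π)², the wrapped phase difference W = X₁ - X₂ mod 2π has unnormalized density p_W(w) ∝ exp(sqrt(α²+β²) cos(w - Δ)) · I₀( sqrt(κ₁² + κ₂² + 2κ₁κ₂ cos(w - (μ₁-μ₂))) ), where Δ satisfies (cos Δ, sin Δ) sqrt(α²+β²) = (α, β) and I₀ is the modified Bessel function of order 0. -/

import Mathlib

open Real MeasureTheory intervalIntegral

/-- Modified Bessel function of the first kind of order zero, via its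
integral representation. -/
noncomputable def besselI0 (A : ℝ) : ℝ :=
  (1 / (2 * π)) * ∫ u in (0 : ℝ)..(2 * π), Real.exp (A * cos u)

/-- Unnormalized joint density of the bivariate torus graph phase difference
model, extended `2π`-periodically to all of `ℝ²`. -/
noncomputable def bivariateJoint (α β κ₁ κ₂ μ₁ μ₂ : ℝ) (x₁ x₂ : ℝ) : ℝ :=
  Real.exp (α * cos (x₁ - x₂) + β * sin (x₁ - x₂)
    + κ₁ * cos (x₁ - μ₁) + κ₂ * cos (x₂ - μ₂))

lemma exists_phase (a b : ℝ) :
    ∃ φ : ℝ, Real.sqrt (a ^ 2 + b ^ 2) * cos φ = a ∧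
      Real.sqrt (a ^ 2 + b ^ 2) * sin φ = b := by
  rcases eq_or_ne (Complex.mk a b) 0 with h | h
  · have ha : a = 0 := congrArg Complex.re h
    have hb : b = 0 := congrArg Complex.im h
    exact ⟨0, by simp [ha, hb]⟩
  · refine ⟨Complex.arg (Complex.mk a b), ?_, ?_⟩
    · have := Complex.norm_mul_cos_arg (Complex.mk a b)
      rwa [Complex.norm_def, Complex.normSq_mk, show a * a + b * b = a ^ 2 + b ^ 2 by ring]
        at this
    · have := Complex.norm_mul_sin_arg (Complex.mk a b)
      rwa [Complex.norm_def, Complex.normSq_mk, show a * a + b * b = a ^ 2 + b ^ 2 by ring]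
        at this

lemma integral_exp_lincomb (a b : ℝ) :
    ∫ x in (0 : ℝ)..(2 * π), Real.exp (a * cos x + b * sin x)
      = 2 * π * besselI0 (Real.sqrt (a ^ 2 + b ^ 2)) := by
  obtain ⟨φ, hc, hs⟩ := exists_phase a b
  set A := Real.sqrt (a ^ 2 + b ^ 2) with hA
  have hper : Function.Periodic (fun u : ℝ => Real.exp (A * cos u)) (2 * π) := by
    intro x; simp [Real.cos_add_two_pi]
  have h1 : ∀ x : ℝ, a * cos x + b * sin x = A * cos (x - φ) := by
    intro x
    rw [Real.cos_sub]
    linear_combination cos x * hc.symm + sin x * hs.symm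
  calc ∫ x in (0 : ℝ)..(2 * π), Real.exp (a * cos x + b * sin x)
      = ∫ x in (0 : ℝ)..(2 * π), Real.exp (A * cos (x - φ)) := by
        simp only [h1]
    _ = ∫ u in (0 - φ : ℝ)..(2 * π - φ), Real.exp (A * cos u) := by
        rw [← intervalIntegral.integral_comp_sub_right (fun u => Real.exp (A * cos u)) φ]
    _ = ∫ u in (0 : ℝ)..(2 * π), Real.exp (A * cos u) := by
        have h := hper.intervalIntegral_add_eq (-φ) 0
        rw [show (0 : ℝ) - φ = -φ by ring, show 2 * π - φ = -φ + 2 * π by ring]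
        simpa using h
    _ = 2 * π * besselI0 A := by
        rw [besselI0]
        field_simp

theorem bivariate_wrapped_phase_difference_density
    (α β κ₁ κ₂ μ₁ μ₂ Δ : ℝ)
    (hαβ : (α, β) ≠ (0, 0)) (hκ₁ : 0 ≤ κ₁) (hκ₂ : 0 ≤ κ₂)
    (hΔc : Real.sqrt (α ^ 2 + β ^ 2) * cos Δ = α)
    (hΔs : Real.sqrt (α ^ 2 + β ^ 2) * sin Δ = β) :
    ∃ c : ℝ, 0 < c ∧ ∀ w : ℝ,
      (∫ x₂ in (0 : ℝ)..(2 * π), bivariateJoint α β κ₁ κ₂ μ₁ μ₂ (w + x₂) x₂)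
        = c * Real.exp (Real.sqrt (α ^ 2 + β ^ 2) * cos (w - Δ)) *
            besselI0 (Real.sqrt (κ₁ ^ 2 + κ₂ ^ 2
              + 2 * κ₁ * κ₂ * cos (w - (μ₁ - μ₂)))) := by
  refine ⟨2 * π, by positivity, fun w => ?_⟩
  set a : ℝ := κ₁ * cos (w - μ₁) + κ₂ * cos μ₂ with ha
  set b : ℝ := -(κ₁ * sin (w - μ₁)) + κ₂ * sin μ₂ with hb
  have hfirst : α * cos w + β * sin w = Real.sqrt (α ^ 2 + β ^ 2) * cos (w - Δ) := by
    rw [Real.cos_sub]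
    linear_combination cos w * hΔc.symm + sin w * hΔs.symm
  have hsq : a ^ 2 + b ^ 2 = κ₁ ^ 2 + κ₂ ^ 2 + 2 * κ₁ * κ₂ * cos (w - (μ₁ - μ₂)) := by
    have h2 : cos (w - (μ₁ - μ₂)) = cos (w - μ₁) * cos μ₂ - sin (w - μ₁) * sin μ₂ := by
      rw [show w - (μ₁ - μ₂) = (w - μ₁) + μ₂ by ring, Real.cos_add]
    rw [ha, hb, h2]
    have p1 := Real.sin_sq_add_cos_sq (w - μ₁)
    have p2 := Real.sin_sq_add_cos_sq μ₂
    nlinarith [p1, p2]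
  have hint : ∀ x₂ : ℝ, bivariateJoint α β κ₁ κ₂ μ₁ μ₂ (w + x₂) x₂
      = Real.exp (Real.sqrt (α ^ 2 + β ^ 2) * cos (w - Δ)) *
          Real.exp (a * cos x₂ + b * sin x₂) := by
    intro x₂
    rw [bivariateJoint, ← Real.exp_add, ← hfirst]
    congr 1
    have e1 : w + x₂ - x₂ = w := by ring
    have e2 : w + x₂ - μ₁ = x₂ + (w - μ₁) := by ring
    rw [e1, e2, Real.cos_add, Real.cos_sub x₂ μ₂]
    ring
  calc (∫ x₂ in (0 : ℝ)..(2 * π), bivariateJoint α β κ₁ κ₂ μ₁ μ₂ (w + x₂) x₂)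
      = ∫ x₂ in (0 : ℝ)..(2 * π),
          Real.exp (Real.sqrt (α ^ 2 + β ^ 2) * cos (w - Δ)) *
            Real.exp (a * cos x₂ + b * sin x₂) := by simp only [hint]
    _ = Real.exp (Real.sqrt (α ^ 2 + β ^ 2) * cos (w - Δ)) *
          ∫ x₂ in (0 : ℝ)..(2 * π), Real.exp (a * cos x₂ + b * sin x₂) := by
        rw [intervalIntegral.integral_const_mul]
    _ = _ := by
        rw [integral_exp_lincomb a b, hsq]
        ring
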